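/- For K ≥ 2 and M ≥ 1, consider the single-worker system S_{M,K} with N = 1, B_1 = 1, W_1 = 1, b = (1/M, 1, ..., 1) and w = (1/M, 1, ..., 1). Then: (1) since Σ_{k=1}^K C_1/c_k = K, the Nash-equilibrium throughput vector is α^nc = (M/K, 1/K, ..., 1/K); (2) the maximum of Σ_{k=1}^K α_k over the utility set equals M, attained at (M, 0, ..., 0); hence (3) the inefficiency ratio I_Σ(S_{M,K}) = M / (Σ_k α^nc_k) = M·K/(M + K − 1), which tends to K as M → ∞. Consequently, the price of anarchy sup_S I_Σ(S) is unbounded (it is at least K for every K). -/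

import Mathlib

/-- The closed-form Nash-equilibrium rate of application `k` on a worker with
bandwidth `Bn` and computing power `Wn`, for `K` applications with task sizes
`b` and `w` (indexed `1,...,K`), writing `c_k = b_k/w_k` and `C_n = B_n/W_n`:
if `Σ_k C_n/c_k ≤ K` the rate is `B_n/(K·b_k)`; otherwise if `Σ_k c_k/C_n ≤ K`
it is `W_n/(K·w_k)`; otherwise it is given by the two-regime formula determined
by the unique `m ∈ {1,...,K-1}` satisfying the sandwich condition. -/
noncomputable def nashRate (K : ℕ) (b w : ℕ → ℝ) (Bn Wn : ℝ) (k : ℕ) : ℝ :=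
  if (∑ j ∈ Finset.Icc 1 K, (Bn / Wn) / (b j / w j)) ≤ (K : ℝ) then
    Bn / (K * b k)
  else if (∑ j ∈ Finset.Icc 1 K, (b j / w j) / (Bn / Wn)) ≤ (K : ℝ) then
    Wn / (K * w k)
  else if h : ∃ m, m ∈ Finset.Icc 1 (K - 1) ∧
      (b m / w m) / (Bn / Wn) <
        ((m : ℝ) - ∑ j ∈ Finset.Icc 1 m, (b j / w j) / (Bn / Wn)) /
          ((K : ℝ) - (m : ℝ) - ∑ j ∈ Finset.Icc (m + 1) K, (Bn / Wn) / (b j / w j)) ∧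
      ((m : ℝ) - ∑ j ∈ Finset.Icc 1 m, (b j / w j) / (Bn / Wn)) /
          ((K : ℝ) - (m : ℝ) - ∑ j ∈ Finset.Icc (m + 1) K, (Bn / Wn) / (b j / w j)) <
        (b (m + 1) / w (m + 1)) / (Bn / Wn) then
    let m := h.choose
    let Δ : ℝ := (m : ℝ) * ((K : ℝ) - (m : ℝ)) -
      (∑ p ∈ Finset.Icc 1 m, b p / w p) * (∑ p ∈ Finset.Icc (m + 1) K, 1 / (b p / w p))
    if k ≤ m then
      (Wn / w k) * (((K : ℝ) - (m : ℝ)) -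
        ∑ p ∈ Finset.Icc (m + 1) K, (Bn / Wn) / (b p / w p)) / Δ
    else
      (Bn / b k) * ((m : ℝ) - ∑ p ∈ Finset.Icc 1 m, (b p / w p) / (Bn / Wn)) / Δ
  else 0

/-- A throughput vector `α` is feasible for the system `(K,b,w,N,B,W)` if it can be
decomposed into per-worker rates `A n k ≥ 0` respecting every worker's communication
and computation constraints. -/
def Feasible (N K : ℕ) (B W b w : ℕ → ℝ) (α : ℕ → ℝ) : Prop :=
  (∀ k ∈ Finset.Icc 1 K, 0 ≤ α k) ∧
  ∃ A : ℕ → ℕ → ℝ,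
    (∀ n ∈ Finset.Icc 1 N, ∀ k ∈ Finset.Icc 1 K, 0 ≤ A n k) ∧
    (∀ k ∈ Finset.Icc 1 K, α k = ∑ n ∈ Finset.Icc 1 N, A n k) ∧
    (∀ n ∈ Finset.Icc 1 N, ∑ k ∈ Finset.Icc 1 K, A n k * w k ≤ W n) ∧
    (∀ n ∈ Finset.Icc 1 N, ∑ k ∈ Finset.Icc 1 K, A n k * b k ≤ B n)

/-!
Since `b = w`, every ratio `c_k = b_k / w_k` equals `C_1 = 1`, so the worker is in the regime
`Σ_k C_1 / c_k ≤ K` and the Nash rates are `1 / (K b_k)`, i.e. `(M/K, 1/K, …, 1/K)`, of total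
`(M + K - 1) / K`. As `w_k ≥ 1/M` for all `k`, the computation constraint forces
`Σ_k α_k ≤ M · Σ_k α_k w_k ≤ M`, and `(M, 0, …, 0)` saturates it.
-/

open Filter Topology Finset

theorem nashRate_of_sum_le {K : ℕ} {b w : ℕ → ℝ} {Bn Wn : ℝ}
    (h : ∑ j ∈ Icc 1 K, (Bn / Wn) / (b j / w j) ≤ K) (k : ℕ) :
    nashRate K b w Bn Wn k = Bn / (K * b k) :=
  if_pos h

theorem sum_Icc_one_ite_eq_one {R : Type*} [AddCommMonoid R] {K : ℕ} (hK : 1 ≤ K) (x y : R) :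
    ∑ k ∈ Icc 1 K, (if k = 1 then x else y) = x + (K - 1) • y := by
  rw [← sum_Ioc_add_eq_sum_Icc hK, if_pos rfl, add_comm,
    sum_congr rfl fun k hk => if_neg (mem_Ioc.mp hk).1.ne', sum_const, Nat.card_Ioc]

theorem sum_le_of_sum_mul_le {ι R : Type*} [CommSemiring R] [PartialOrder R] [IsOrderedRing R]
    {s : Finset ι} {α w : ι → R} {M : R} (hM : 0 ≤ M) (hα : ∀ k ∈ s, 0 ≤ α k)
    (hw : ∀ k ∈ s, 1 ≤ M * w k) (h : ∑ k ∈ s, α k * w k ≤ 1) :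
    ∑ k ∈ s, α k ≤ M :=
  calc ∑ k ∈ s, α k
      ≤ ∑ k ∈ s, M * (α k * w k) := sum_le_sum fun k hk => by
        simpa [mul_left_comm] using mul_le_mul_of_nonneg_left (hw k hk) (hα k hk)
    _ = M * ∑ k ∈ s, α k * w k := (mul_sum ..).symm
    _ ≤ M := mul_le_of_le_one_right hM h

theorem tendsto_mul_div_add_atTop {𝕜 : Type*} [Field 𝕜] [LinearOrder 𝕜] [IsStrictOrderedRing 𝕜]
    [TopologicalSpace 𝕜] [OrderTopology 𝕜] (a c : 𝕜) :
    Tendsto (fun x : 𝕜 => x * a / (x + c)) atTop (𝓝 a) := by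
  have h : Tendsto (fun x : 𝕜 => a - a * c / (x + c)) atTop (𝓝 (a - 0)) :=
    tendsto_const_nhds.sub <|
      tendsto_const_nhds.div_atTop <| tendsto_atTop_add_const_right _ _ tendsto_id
  rw [sub_zero] at h
  refine h.congr' ?_
  filter_upwards [eventually_gt_atTop (-c)] with x hx
  have : x + c ≠ 0 := by linarith
  field_simp
  ring

/-- For the single-worker system `S_{M,K}` (`B_1 = W_1 = 1`,
`b = w = (1/M,1,...,1)`): (1) `Σ_k C_1/c_k = K` and the Nash throughputs are
`(M/K, 1/K, ..., 1/K)`; (2) the maximum of `Σ_k α_k` over the utility set is `M`,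
attained at `(M,0,...,0)`; (3) the inefficiency ratio equals `M·K/(M+K−1)`, which
tends to `K` as `M → ∞` — so the price of anarchy is at least `K` for every `K`. -/
theorem stmt_16 (K : ℕ) (hK : 2 ≤ K) (M : ℝ) (hM : 1 ≤ M) :
    let b : ℕ → ℝ := fun k => if k = 1 then 1 / M else 1
    let w : ℕ → ℝ := fun k => if k = 1 then 1 / M else 1
    -- (1) Σ_k C_1/c_k = K and the Nash equilibrium is (M/K, 1/K, ..., 1/K)
    ((∑ k ∈ Finset.Icc 1 K, ((1 : ℝ) / 1) / (b k / w k)) = (K : ℝ) ∧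
      nashRate K b w 1 1 1 = M / K ∧
      (∀ k ∈ Finset.Icc 2 K, nashRate K b w 1 1 k = 1 / K)) ∧
    -- (2) the maximum of the total throughput over the utility set equals M ...
    (IsGreatest {s : ℝ | ∃ α : ℕ → ℝ,
        (∀ k ∈ Finset.Icc 1 K, 0 ≤ α k) ∧
        (∑ k ∈ Finset.Icc 1 K, α k * w k) ≤ 1 ∧
        (∑ k ∈ Finset.Icc 1 K, α k * b k) ≤ 1 ∧
        s = ∑ k ∈ Finset.Icc 1 K, α k} M ∧
      -- ... attained at (M, 0, ..., 0)
      ((∀ k ∈ Finset.Icc 1 K, (0 : ℝ) ≤ (if k = 1 then M else 0)) ∧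
        (∑ k ∈ Finset.Icc 1 K, (if k = 1 then M else 0) * w k) ≤ 1 ∧
        (∑ k ∈ Finset.Icc 1 K, (if k = 1 then M else 0) * b k) ≤ 1 ∧
        (∑ k ∈ Finset.Icc 1 K, (if k = 1 then M else (0 : ℝ))) = M)) ∧
    -- (3) the inefficiency ratio and its limit
    (M / (∑ k ∈ Finset.Icc 1 K, nashRate K b w 1 1 k) = M * K / (M + K - 1) ∧
      Filter.Tendsto (fun M' : ℝ => M' * K / (M' + K - 1))
        Filter.atTop (nhds (K : ℝ))) := by
  intro b w
  have hK1 : 1 ≤ K := by omega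
  have hM0 : 0 < M := by linarith
  have hc : ∀ k, b k / w k = 1 := fun k => div_self (by positivity)
  have hC : ∑ k ∈ Icc 1 K, ((1 : ℝ) / 1) / (b k / w k) = K := by simp [hc]
  have hnash : ∀ k, nashRate K b w 1 1 k = if k = 1 then M / K else 1 / K := by
    intro k
    rw [nashRate_of_sum_le hC.le]
    rcases eq_or_ne k 1 with rfl | hk
    · simp only [b, ↓reduceIte]
      field_simp
    · simp only [b, if_neg hk, mul_one]
  have hwitness : ∀ v : ℕ → ℝ, v 1 = 1 / M →
      ∑ k ∈ Icc 1 K, (if k = 1 then M else 0) * v k = 1 := by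
    intro v hv
    simp only [ite_mul, zero_mul]
    rw [sum_ite_eq']
    simp [hK1, hv, hM0.ne']
  have hsumM : ∑ k ∈ Icc 1 K, (if k = 1 then M else (0 : ℝ)) = M := by
    simp [sum_Icc_one_ite_eq_one hK1]
  have hnonneg : ∀ k ∈ Icc 1 K, (0 : ℝ) ≤ if k = 1 then M else 0 := fun k _ => by
    positivity
  refine ⟨⟨hC, by simp [hnash], fun k hk => by rw [hnash, if_neg (ne_of_gt (mem_Icc.mp hk).1)]⟩,
    ⟨⟨⟨_, hnonneg, (hwitness w rfl).le, (hwitness b rfl).le, hsumM.symm⟩, ?_⟩,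
      hnonneg, (hwitness w rfl).le, (hwitness b rfl).le, hsumM⟩, ?_,
    by simpa only [add_sub_assoc] using tendsto_mul_div_add_atTop (K : ℝ) (K - 1)⟩
  · rintro s ⟨α, hα, hαw, -, rfl⟩
    refine sum_le_of_sum_mul_le hM0.le hα (fun k _ => ?_) hαw
    by_cases hk : k = 1 <;> simp [w, hk, hM0.ne', hM]
  · rw [funext hnash, sum_Icc_one_ite_eq_one hK1, nsmul_eq_mul, Nat.cast_pred hK1]
    field_simp
    ring
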